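/- arXiv:2206.06854 — 7 statements merged into one kernel-verified Lean document; each statement's English description precedes it below -/
import Mathlib

section
/- Let E be a real normed vector space and let f : E → ℝ be 1-Lipschitz. Suppose x, y ∈ E with x ≠ y satisfy f(x) - f(y) = ‖x - y‖, and let z = x + α • (y - x) for some α ∈ [0, 1]. If f is (Fréchet) differentiable at z, then the derivative Df(z) satisfies Df(z)(x - y) = ‖x - y‖ and the operator norm of Df(z) equals 1. -/
/-- Along a transport ray of a 1-Lipschitz function, at any differentiability
point of the segment the derivative attains its norm in the ray direction and
has operator norm one. -/
theorem otnn_unit_derivative_on_ray {E : Type*} [NormedAddCommGroup E] [NormedSpace ℝ E]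
    (f : E → ℝ) (hf : LipschitzWith 1 f) (x y : E) (hne : x ≠ y)
    (hxy : f x - f y = ‖x - y‖) (α : ℝ) (hα : α ∈ Set.Icc (0 : ℝ) 1)
    (hdiff : DifferentiableAt ℝ f (x + α • (y - x))) :
    fderiv ℝ f (x + α • (y - x)) (x - y) = ‖x - y‖ ∧
    ‖fderiv ℝ f (x + α • (y - x))‖ = 1 := by
  have hnorm : (0:ℝ) < ‖x - y‖ := by
    rwa [norm_pos_iff, sub_ne_zero]
  -- key affine equality on the segment
  have key : ∀ t ∈ Set.Icc (0:ℝ) 1, f (x + t • (y - x)) = f x - t * ‖x - y‖ := by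
    intro t ht
    obtain ⟨ht0, ht1⟩ := ht
    set z := x + t • (y - x) with hz
    have h1 : f x - f z ≤ t * ‖x - y‖ := by
      have := hf.dist_le_mul x z
      rw [NNReal.coe_one, one_mul] at this
      have hd : dist x z = t * ‖x - y‖ := by
        rw [dist_eq_norm, hz]
        simp only [sub_add_eq_sub_sub, sub_self, zero_sub, norm_neg, norm_smul,
          Real.norm_eq_abs, abs_of_nonneg ht0, norm_sub_rev y x]
      calc f x - f z ≤ |f x - f z| := le_abs_self _
        _ = dist (f x) (f z) := (Real.dist_eq _ _).symm
        _ ≤ t * ‖x - y‖ := by rw [← hd]; exact this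
    have h2 : f z - f y ≤ (1 - t) * ‖x - y‖ := by
      have := hf.dist_le_mul z y
      rw [NNReal.coe_one, one_mul] at this
      have hd : dist z y = (1 - t) * ‖x - y‖ := by
        rw [dist_eq_norm, hz]
        have : x + t • (y - x) - y = -((1 - t) • (y - x)) := by
          rw [sub_smul, one_smul]; abel
        rw [this, norm_neg, norm_smul, Real.norm_eq_abs,
          abs_of_nonneg (by linarith), norm_sub_rev y x]
      calc f z - f y ≤ |f z - f y| := le_abs_self _
        _ = dist (f z) (f y) := (Real.dist_eq _ _).symm
        _ ≤ (1 - t) * ‖x - y‖ := by rw [← hd]; exact this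
    have hsum : (f x - f z) + (f z - f y) = ‖x - y‖ := by
      rw [← hxy]; ring
    have : f x - f z = t * ‖x - y‖ := by nlinarith
    linarith
  set z := x + α • (y - x) with hz
  set D := fderiv ℝ f z with hD
  -- curve derivative
  have hc : HasDerivAt (fun t : ℝ => x + t • (y - x)) (y - x) α := by
    have : HasDerivAt (fun t : ℝ => t • (y - x)) ((1:ℝ) • (y - x)) α :=
      (hasDerivAt_id α).smul_const (y - x)
    simpa using this.const_add x
  have hg : HasDerivAt (fun t : ℝ => f (x + t • (y - x))) (D (y - x)) α :=
    hdiff.hasFDerivAt.comp_hasDerivAt α hc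
  have hg' : HasDerivWithinAt (fun t : ℝ => f (x + t • (y - x)))
      (D (y - x)) (Set.Icc 0 1) α := hg.hasDerivWithinAt
  have haff : HasDerivWithinAt (fun t : ℝ => f x - t * ‖x - y‖)
      (-‖x - y‖) (Set.Icc 0 1) α := by
    have : HasDerivAt (fun t : ℝ => f x - t * ‖x - y‖) (-‖x - y‖) α := by
      simpa using ((hasDerivAt_id α).mul_const ‖x - y‖).const_sub (f x)
    exact this.hasDerivWithinAt
  have hcongr : HasDerivWithinAt (fun t : ℝ => f x - t * ‖x - y‖)
      (D (y - x)) (Set.Icc 0 1) α := by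
    refine hg'.congr (fun t ht => (key t ht).symm) ((key α hα).symm)
  have hu : UniqueDiffWithinAt ℝ (Set.Icc (0:ℝ) 1) α :=
    uniqueDiffOn_Icc one_pos α hα
  have heq : D (y - x) = -‖x - y‖ := by
    rw [← hcongr.derivWithin hu, haff.derivWithin hu]
  have hmain : D (x - y) = ‖x - y‖ := by
    have : D (x - y) = -D (y - x) := by
      rw [← map_neg]; congr 1; abel
    rw [this, heq, neg_neg]
  refine ⟨hmain, le_antisymm ?_ ?_⟩
  · have := norm_fderiv_le_of_lipschitz ℝ (x₀ := z) hf
    simpa using this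
  · have h1 : ‖x - y‖ ≤ ‖D‖ * ‖x - y‖ := by
      calc ‖x - y‖ = ‖D (x - y)‖ := by rw [hmain, Real.norm_eq_abs, abs_of_pos hnorm]
        _ ≤ ‖D‖ * ‖x - y‖ := D.le_opNorm _
    exact le_of_mul_le_mul_right (by linarith) hnorm
end

section
/- Let E be a complete real inner product space and let f : E → ℝ be 1-Lipschitz. Suppose x, y ∈ E with x ≠ y satisfy f(x) - f(y) = ‖x - y‖, and let z = x + α • (y - x) for some α ∈ [0, 1]. If f is differentiable at z, then the gradient of f at z equals the unit vector ‖x - y‖⁻¹ • (x - y). -/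
/-! On the segment from `x` to `y` the Lipschitz bounds through an intermediate point add up to
the equality `f x - f y = ‖x - y‖`, so both are equalities and `f` decreases at unit rate along the
segment. Hence `⟪∇f z, u⟫ = 1` for the unit vector `u = ‖x - y‖⁻¹ • (x - y)`, while `‖∇f z‖ ≤ 1`
since `f` is 1-Lipschitz; this forces `∇f z = u`, as `‖∇f z - u‖² = ‖∇f z‖² - 1 ≤ 0`. -/

open Set InnerProductSpace

lemma LipschitzWith.sub_le_norm_sub {E : Type*} [SeminormedAddCommGroup E] {f : E → ℝ}
    (hf : LipschitzWith 1 f) (a b : E) : f a - f b ≤ ‖a - b‖ := by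
  simpa [Real.dist_eq, dist_eq_norm] using (le_abs_self _).trans (hf.dist_le_mul a b)

lemma LipschitzWith.apply_segment_eq_of_sub_eq_norm {E : Type*} [SeminormedAddCommGroup E]
    [NormedSpace ℝ E] {f : E → ℝ} (hf : LipschitzWith 1 f)
    {x y : E} (hxy : f x - f y = ‖x - y‖) {t : ℝ} (ht : t ∈ Icc (0 : ℝ) 1) :
    f (x + t • (y - x)) = f x - t * ‖x - y‖ := by
  have hleft : f x - f (x + t • (y - x)) ≤ t * ‖x - y‖ :=
    calc f x - f (x + t • (y - x)) ≤ ‖x - (x + t • (y - x))‖ := hf.sub_le_norm_sub _ _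
      _ = ‖t • (x - y)‖ := by congr 1; module
      _ = t * ‖x - y‖ := by rw [norm_smul, Real.norm_of_nonneg ht.1]
  have hright : f (x + t • (y - x)) - f y ≤ (1 - t) * ‖x - y‖ :=
    calc f (x + t • (y - x)) - f y ≤ ‖x + t • (y - x) - y‖ := hf.sub_le_norm_sub _ _
      _ = ‖(1 - t) • (x - y)‖ := by congr 1; module
      _ = (1 - t) * ‖x - y‖ := by rw [norm_smul, Real.norm_of_nonneg (sub_nonneg.2 ht.2)]
  linarith

section
variable {E : Type*} [NormedAddCommGroup E] [NormedSpace ℝ E]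

lemma HasFDerivAt.apply_eq_of_eqOn_segment {f : E → ℝ} {f' : E →L[ℝ] ℝ} {x v : E} {c α : ℝ}
    (hf : HasFDerivAt f f' (x + α • v)) (hα : α ∈ Icc (0 : ℝ) 1)
    (hseg : ∀ t ∈ Icc (0 : ℝ) 1, f (x + t • v) = f x + t * c) : f' v = c := by
  have hcurve : HasDerivAt (fun t : ℝ => x + t • v) v α := by
    simpa using ((hasDerivAt_id α).smul_const v).const_add x
  have hcomp : HasDerivWithinAt (fun t : ℝ => f (x + t • v)) (f' v) (Icc 0 1) α :=
    (hf.comp_hasDerivAt α hcurve).hasDerivWithinAt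
  have haffine : HasDerivWithinAt (fun t : ℝ => f (x + t • v)) c (Icc 0 1) α := by
    have : HasDerivWithinAt (fun t : ℝ => f x + t * c) c (Icc 0 1) α := by
      simpa using ((hasDerivAt_id α).mul_const c).const_add (f x) |>.hasDerivWithinAt
    exact this.congr hseg (hseg α hα)
  exact (uniqueDiffOn_Icc one_pos α hα).eq_deriv _ hcomp haffine

end

section
variable {E : Type*} [NormedAddCommGroup E] [InnerProductSpace ℝ E]

lemma eq_inv_norm_smul_of_norm_le_one_of_inner_eq_norm {g v : E} (hg : ‖g‖ ≤ 1)
    (hinner : ⟪g, v⟫_ℝ = ‖v‖) (hv : v ≠ 0) : g = ‖v‖⁻¹ • v := by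
  have hvpos : 0 < ‖v‖ := norm_pos_iff.2 hv
  have hu : ‖‖v‖⁻¹ • v‖ = 1 := norm_smul_inv_norm hv
  have hgu : ⟪g, ‖v‖⁻¹ • v⟫_ℝ = 1 := by
    rw [real_inner_smul_right, hinner, inv_mul_cancel₀ hvpos.ne']
  have hsq : ‖g - ‖v‖⁻¹ • v‖ ^ 2 ≤ 0 := by
    rw [norm_sub_sq_real, hgu, hu]
    nlinarith [norm_nonneg g]
  exact sub_eq_zero.1 (norm_eq_zero.1 (by nlinarith [norm_nonneg (g - ‖v‖⁻¹ • v)]))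

lemma norm_gradient_le_of_lipschitzWith [CompleteSpace E] {f : E → ℝ} {K : NNReal}
    (hf : LipschitzWith K f) (z : E) : ‖gradient f z‖ ≤ K := by
  rw [gradient, LinearIsometryEquiv.norm_map]
  exact norm_fderiv_le_of_lipschitz ℝ hf

end

/-- Along a transport ray of a 1-Lipschitz function on a real Hilbert space,
at any differentiability point of the segment the gradient is the unit vector
pointing along the ray. -/
theorem otnn_gradient_on_ray {E : Type*} [NormedAddCommGroup E] [InnerProductSpace ℝ E]
    [CompleteSpace E]
    (f : E → ℝ) (hf : LipschitzWith 1 f) (x y : E) (hne : x ≠ y)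
    (hxy : f x - f y = ‖x - y‖) (α : ℝ) (hα : α ∈ Set.Icc (0 : ℝ) 1)
    (hdiff : DifferentiableAt ℝ f (x + α • (y - x))) :
    gradient f (x + α • (y - x)) = ‖x - y‖⁻¹ • (x - y) := by
  have hslope : ⟪gradient f (x + α • (y - x)), y - x⟫_ℝ = -‖x - y‖ :=
    hdiff.hasGradientAt.hasFDerivAt.apply_eq_of_eqOn_segment hα fun t ht => by
      rw [hf.apply_segment_eq_of_sub_eq_norm hxy ht]; ring
  have hinner : ⟪gradient f (x + α • (y - x)), x - y⟫_ℝ = ‖x - y‖ := by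
    rw [← neg_sub y x, inner_neg_right, hslope, neg_neg, neg_sub]
  exact eq_inv_norm_smul_of_norm_le_one_of_inner_eq_norm
    (norm_gradient_le_of_lipschitzWith hf _) hinner (sub_ne_zero.2 hne)
end

section
/- Let E be a complete real inner product space and let f : E → ℝ be 1-Lipschitz. Suppose x, y ∈ E with x ≠ y satisfy f(x) - f(y) = ‖x - y‖, and suppose f is differentiable at x. Then there exists t ≥ 0 such that y = x - t • ∇f(x), where ∇f(x) denotes the gradient of f at x; indeed t = ‖x - y‖ works. -/
/-!
Along the segment from `x` to `y` the 1-Lipschitz function `f` must drop at the maximal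
rate `‖y - x‖`, so the directional derivative `⟪∇f x, y - x⟫` is at most `-‖y - x‖`.
Since also `‖∇f x‖ ≤ 1`, expanding `‖(y - x) + ‖y - x‖ • ∇f x‖²` shows that it is `≤ 0`,
which is the equality case of Cauchy–Schwarz: `y - x = -‖y - x‖ • ∇f x`.
-/

open RealInnerProductSpace Set

theorem LipschitzWith.apply_add_smul_sub_le {F : Type*} [SeminormedAddCommGroup F]
    [NormedSpace ℝ F] {f : F → ℝ} (hf : LipschitzWith 1 f) {x y : F}
    (hxy : f x - f y = ‖x - y‖) {s : ℝ} (hs : s ≤ 1) :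
    f (x + s • (y - x)) ≤ f x - s * ‖y - x‖ := by
  have hdist : ‖x + s • (y - x) - y‖ = (1 - s) * ‖y - x‖ := by
    rw [show x + s • (y - x) - y = (1 - s) • (x - y) by module, norm_smul,
      Real.norm_of_nonneg (sub_nonneg.2 hs), norm_sub_rev]
  have hlip : f (x + s • (y - x)) - f y ≤ ‖x + s • (y - x) - y‖ := by
    have := hf.dist_le_mul (x + s • (y - x)) y
    rw [Real.dist_eq, dist_eq_norm, NNReal.coe_one, one_mul] at this
    exact (le_abs_self _).trans this
  rw [norm_sub_rev] at hxy
  linarith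

theorem DifferentiableAt.fderiv_apply_le_of_forall_le_sub_mul {F : Type*}
    [NormedAddCommGroup F] [NormedSpace ℝ F] {f : F → ℝ} {x v : F} {c : ℝ}
    (hf : DifferentiableAt ℝ f x) (h : ∀ s ∈ Icc (0 : ℝ) 1, f (x + s • v) ≤ f x - s * c) :
    fderiv ℝ f x v ≤ -c := by
  set φ : ℝ → ℝ := fun s ↦ f (x + s • v) + s * c
  have hmax : IsLocalMaxOn φ (Icc 0 1) 0 :=
    IsMaxOn.localize fun s hs ↦ by
      change φ s ≤ φ 0
      simp only [φ, zero_smul, add_zero, zero_mul]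
      linarith [h s hs]
  have hderiv : HasDerivAt φ (fderiv ℝ f x v + c) 0 := by
    have hline : HasDerivAt (fun s : ℝ ↦ x + s • v) v 0 := by
      simpa only [hasDerivAt_const_add_iff, id_eq, one_smul] using
        ((hasDerivAt_id (0 : ℝ)).smul_const v).const_add x
    have := (hf.hasFDerivAt.comp_hasDerivAt_of_eq 0 hline (by simp)).add
      ((hasDerivAt_id (0 : ℝ)).mul_const c)
    rwa [one_mul] at this
  have hcone : (1 : ℝ) ∈ posTangentConeAt (Icc (0 : ℝ) 1) 0 :=
    mem_posTangentConeAt_of_segment_subset (by simp [segment_eq_Icc])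
  have := hmax.hasFDerivWithinAt_nonpos hderiv.hasFDerivAt.hasFDerivWithinAt hcone
  rw [ContinuousLinearMap.toSpanSingleton_apply, smul_eq_mul, one_mul] at this
  linarith

theorem eq_neg_norm_smul_of_inner_le_neg_norm {E : Type*} [NormedAddCommGroup E]
    [InnerProductSpace ℝ E] {g w : E} (hg : ‖g‖ ≤ 1) (hgw : ⟪g, w⟫ ≤ -‖w‖) :
    w = -(‖w‖ • g) := by
  have hsq : ‖w + ‖w‖ • g‖ ^ 2 ≤ 0 := by
    rw [norm_add_sq_real, real_inner_smul_right, real_inner_comm, norm_smul, norm_norm]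
    have : ‖g‖ ^ 2 ≤ 1 := by nlinarith [norm_nonneg g]
    nlinarith [norm_nonneg w, mul_le_mul_of_nonneg_left hgw (norm_nonneg w)]
  rw [eq_neg_iff_add_eq_zero, ← norm_eq_zero]
  exact pow_eq_zero_iff two_ne_zero |>.1 (le_antisymm hsq (sq_nonneg _))

theorem LipschitzWith.norm_gradient_le {E : Type*} [NormedAddCommGroup E]
    [InnerProductSpace ℝ E] [CompleteSpace E] {f : E → ℝ} (hf : LipschitzWith 1 f) (x : E) :
    ‖gradient f x‖ ≤ 1 := by
  rw [gradient, LinearIsometryEquiv.norm_map]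
  exact_mod_cast norm_fderiv_le_of_lipschitz ℝ hf

theorem otnn_transport_direction_pos_general {E : Type*} [NormedAddCommGroup E]
    [InnerProductSpace ℝ E] [CompleteSpace E]
    (f : E → ℝ) (hf : LipschitzWith 1 f) (x y : E)
    (hxy : f x - f y = ‖x - y‖) (hdiff : DifferentiableAt ℝ f x) :
    ∃ t : ℝ, 0 ≤ t ∧ t = ‖x - y‖ ∧ y = x - t • gradient f x := by
  have hdir : ⟪gradient f x, y - x⟫ ≤ -‖y - x‖ := by
    rw [inner_gradient_left]
    exact hdiff.fderiv_apply_le_of_forall_le_sub_mul fun s hs ↦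
      hf.apply_add_smul_sub_le hxy hs.2
  have hyx := eq_neg_norm_smul_of_inner_le_neg_norm (hf.norm_gradient_le x) hdir
  refine ⟨‖x - y‖, norm_nonneg _, rfl, ?_⟩
  rw [norm_sub_rev] at hyx
  linear_combination (norm := module) hyx

/-- Proposition 1 (transportation plan direction, `t ≥ 0` case): if
`f x - f y = ‖x - y‖` for a 1-Lipschitz `f` differentiable at `x`, then `y`
lies in the direction `-∇f(x)` from `x`, at parameter `t = ‖x - y‖ ≥ 0`. -/
theorem otnn_transport_direction_pos {E : Type*} [NormedAddCommGroup E]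
    [InnerProductSpace ℝ E] [CompleteSpace E]
    (f : E → ℝ) (hf : LipschitzWith 1 f) (x y : E) (hne : x ≠ y)
    (hxy : f x - f y = ‖x - y‖) (hdiff : DifferentiableAt ℝ f x) :
    ∃ t : ℝ, 0 ≤ t ∧ t = ‖x - y‖ ∧ y = x - t • gradient f x :=
  otnn_transport_direction_pos_general f hf x y hxy hdiff
end

section
/- Let E be a complete real inner product space and let f : E → ℝ be 1-Lipschitz. Suppose x, y ∈ E with x ≠ y satisfy f(y) - f(x) = ‖x - y‖, and suppose f is differentiable at x. Then there exists t ≤ 0 such that y = x - t • ∇f(x), where ∇f(x) denotes the gradient of f at x; indeed t = -‖x - y‖ works. -/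
/-!
Since `f` is 1-Lipschitz, `z ↦ f z + ‖z - y‖` is bounded below by `f y`, and the hypothesis
`f y - f x = ‖x - y‖` says that this bound is attained at `x`. Away from `y` the norm term is
differentiable, so Fermat's rule at the minimum `x` gives `∇f(x) = (y - x) / ‖x - y‖`.
-/

open Set InnerProductSpace

theorem LipschitzWith.isMinOn_add_dist {X : Type*} [PseudoMetricSpace X] {f : X → ℝ}
    (hf : LipschitzWith 1 f) {x y : X} (hxy : f y - f x = dist x y) :
    IsMinOn (fun z ↦ f z + dist z y) univ x := fun z _ ↦ by
  have h := hf.dist_le_mul y z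
  rw [NNReal.coe_one, one_mul, Real.dist_eq, dist_comm] at h
  change f x + dist x y ≤ f z + dist z y
  linarith [le_abs_self (f y - f z)]

theorem HasFDerivAt.norm {E F : Type*} [NormedAddCommGroup E] [InnerProductSpace ℝ E]
    [NormedAddCommGroup F] [NormedSpace ℝ F] {g : F → E} {g' : F →L[ℝ] E} {x : F}
    (hg : HasFDerivAt g g' x) (hx : g x ≠ 0) :
    HasFDerivAt (fun z ↦ ‖g z‖) (‖g x‖⁻¹ • (innerSL ℝ (g x)).comp g') x := by
  have hsq : ‖g x‖ ^ 2 ≠ 0 := by positivity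
  convert hg.norm_sq.sqrt hsq using 1
  · simp_rw [Real.sqrt_sq (norm_nonneg _)]
  · rw [Real.sqrt_sq (norm_nonneg _), ← Nat.cast_smul_eq_nsmul ℝ, smul_smul]
    congr 1
    field_simp
    norm_num

theorem LipschitzWith.gradient_eq_of_sub_eq_norm {E : Type*} [NormedAddCommGroup E]
    [InnerProductSpace ℝ E] [CompleteSpace E] {f : E → ℝ} (hf : LipschitzWith 1 f) {x y : E}
    (hne : x ≠ y) (hxy : f y - f x = ‖x - y‖) (hdiff : DifferentiableAt ℝ f x) :
    gradient f x = ‖x - y‖⁻¹ • (y - x) := by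
  have hmin : IsLocalMin (fun z ↦ f z + ‖z - y‖) x := by
    simpa only [dist_eq_norm] using
      (hf.isMinOn_add_dist (by rwa [dist_eq_norm])).isLocalMin Filter.univ_mem
  have hnorm := (hasFDerivAt_sub_const (x := x) y).norm (sub_ne_zero.2 hne)
  have hzero := hmin.hasFDerivAt_eq_zero (hdiff.hasFDerivAt.add hnorm)
  rw [gradient, eq_neg_of_add_eq_zero_left hzero, (toDual ℝ E).symm_apply_eq]
  ext v
  simp only [neg_apply, smul_apply, ContinuousLinearMap.comp_id, coe_innerSL_apply,
    toDual_apply_apply, inner_smul_left, inner_sub_left, smul_eq_mul, RCLike.conj_to_real]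
  ring

/-- Proposition 1 (transportation plan direction, `t ≤ 0` case): if
`f y - f x = ‖x - y‖` for a 1-Lipschitz `f` differentiable at `x`, then `y`
lies in the direction `∇f(x)` from `x`, at parameter `t = -‖x - y‖ ≤ 0`. -/
theorem otnn_transport_direction_neg {E : Type*} [NormedAddCommGroup E]
    [InnerProductSpace ℝ E] [CompleteSpace E]
    (f : E → ℝ) (hf : LipschitzWith 1 f) (x y : E) (hne : x ≠ y)
    (hxy : f y - f x = ‖x - y‖) (hdiff : DifferentiableAt ℝ f x) :
    ∃ t : ℝ, t ≤ 0 ∧ t = -‖x - y‖ ∧ y = x - t • gradient f x := by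
  refine ⟨-‖x - y‖, neg_nonpos.2 (norm_nonneg _), rfl, ?_⟩
  rw [hf.gradient_eq_of_sub_eq_norm hne hxy hdiff, neg_smul, sub_neg_eq_add, smul_smul,
    mul_inv_cancel₀ (norm_sub_pos_iff.2 hne).ne', one_smul, add_sub_cancel]
end

section
/- Let E be a real normed vector space and let f : E → ℝ be 1-Lipschitz. Suppose x, y ∈ E with x ≠ y satisfy f(x) ≥ 0, f(y) ≤ 0, and f(x) - f(y) = ‖x - y‖. Then the point z = x + (f(x) / ‖x - y‖) • (y - x) lies on the segment from x to y, satisfies f(z) = 0, and satisfies ‖x - z‖ = f(x). -/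
/-- Proposition 2 (decision boundary, segment form): along a transport ray
joining a positive point `x` to a negative point `y`, the decision boundary is
crossed exactly at distance `f x` from `x`. -/
theorem otnn_boundary_on_segment {E : Type*} [NormedAddCommGroup E] [NormedSpace ℝ E]
    (f : E → ℝ) (hf : LipschitzWith 1 f) (x y : E) (hne : x ≠ y)
    (hfx : 0 ≤ f x) (hfy : f y ≤ 0) (hxy : f x - f y = ‖x - y‖) :
    x + (f x / ‖x - y‖) • (y - x) ∈ segment ℝ x y ∧
    f (x + (f x / ‖x - y‖) • (y - x)) = 0 ∧
    ‖x - (x + (f x / ‖x - y‖) • (y - x))‖ = f x := by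
  have hnorm : (0:ℝ) < ‖x - y‖ := by
    rw [norm_pos_iff, sub_ne_zero]; exact hne
  set t : ℝ := f x / ‖x - y‖ with ht
  have ht0 : 0 ≤ t := div_nonneg hfx hnorm.le
  have hfxle : f x ≤ ‖x - y‖ := by linarith
  have ht1 : t ≤ 1 := (div_le_one hnorm).mpr hfxle
  set z := x + t • (y - x) with hz
  have hlip : ∀ a b : E, |f a - f b| ≤ ‖a - b‖ := by
    intro a b
    have := hf.dist_le_mul a b
    rwa [NNReal.coe_one, one_mul, Real.dist_eq, dist_eq_norm] at this
  have hxz : ‖x - z‖ = f x := by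
    have : x - z = (-t) • (y - x) := by rw [hz]; module
    rw [this, norm_smul, norm_neg, Real.norm_of_nonneg ht0, ht, norm_sub_rev y x,
      div_mul_cancel₀ _ hnorm.ne']
  have hzy : ‖z - y‖ = ‖x - y‖ - f x := by
    have : z - y = (1 - t) • (x - y) := by rw [hz]; module
    rw [this, norm_smul, Real.norm_of_nonneg (by linarith), sub_mul, one_mul, ht,
      div_mul_cancel₀ _ hnorm.ne']
  have h1 := hlip x z
  have h2 := hlip z y
  rw [hxz] at h1
  rw [hzy] at h2
  have hfz : f z = 0 := by
    rw [abs_le] at h1 h2; linarith [h1.1, h1.2, h2.1, h2.2]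
  refine ⟨?_, hfz, hxz⟩
  refine ⟨1 - t, t, by linarith, ht0, by ring, ?_⟩
  rw [hz]; module
end

section
/- Let E be a real normed vector space and let f : E → ℝ be 1-Lipschitz. Suppose x, y ∈ E with x ≠ y satisfy f(x) ≥ 0, f(y) ≤ 0, and f(x) - f(y) = ‖x - y‖. Then every point on the segment from x to y at which f vanishes is at distance exactly f(x) from x; that is, for every α ∈ [0, 1], if f(x + α • (y - x)) = 0 then ‖x - (x + α • (y - x))‖ = f(x), equivalently α = f(x) / ‖x - y‖. In particular the zero of f on the segment is unique. -/
/-- Uniqueness of the boundary crossing on a transport ray: every zero of `f`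
on the segment from `x` to `y` is at distance exactly `f x` from `x`, i.e. at
parameter `α = f x / ‖x - y‖`. -/
theorem otnn_boundary_unique_on_segment {E : Type*} [NormedAddCommGroup E]
    [NormedSpace ℝ E]
    (f : E → ℝ) (hf : LipschitzWith 1 f) (x y : E) (hne : x ≠ y)
    (hfx : 0 ≤ f x) (hfy : f y ≤ 0) (hxy : f x - f y = ‖x - y‖) :
    ∀ α : ℝ, α ∈ Set.Icc (0 : ℝ) 1 → f (x + α • (y - x)) = 0 →
      ‖x - (x + α • (y - x))‖ = f x ∧ α = f x / ‖x - y‖ := by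
  intro α hα hz
  obtain ⟨h0, h1⟩ := hα
  set z := x + α • (y - x) with hzdef
  have hnorm : ‖x - z‖ = α * ‖x - y‖ := by
    have : x - z = α • (x - y) := by
      simp only [hzdef]
      rw [smul_sub, smul_sub]
      abel
    rw [this, norm_smul, Real.norm_eq_abs, abs_of_nonneg h0]
  have hnorm2 : ‖z - y‖ = (1 - α) * ‖x - y‖ := by
    have : z - y = (1 - α) • (x - y) := by
      simp only [hzdef]
      rw [sub_smul, smul_sub, smul_sub, one_smul]
      module
    rw [this, norm_smul, Real.norm_eq_abs, abs_of_nonneg (by linarith)]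
  have lip1 : f x - f z ≤ ‖x - z‖ := by
    have := hf.dist_le_mul x z
    rw [NNReal.coe_one, one_mul, Real.dist_eq, dist_eq_norm] at this
    calc f x - f z ≤ |f x - f z| := le_abs_self _
      _ ≤ ‖x - z‖ := this
  have lip2 : f z - f y ≤ ‖z - y‖ := by
    have := hf.dist_le_mul z y
    rw [NNReal.coe_one, one_mul, Real.dist_eq, dist_eq_norm] at this
    calc f z - f y ≤ |f z - f y| := le_abs_self _
      _ ≤ ‖z - y‖ := this
  rw [hz] at lip1 lip2
  rw [hnorm] at lip1
  rw [hnorm2] at lip2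
  have hxypos : 0 < ‖x - y‖ := by
    rw [norm_pos_iff, sub_ne_zero]; exact hne
  have heq : f x = α * ‖x - y‖ := by nlinarith
  constructor
  · rw [hnorm, heq]
  · rw [heq]; field_simp
end

section
/- Let E be a complete real inner product space and let f : E → ℝ be 1-Lipschitz and differentiable at x ∈ E. Suppose there exists y ∈ E with y ≠ x such that f(x) ≥ 0, f(y) ≤ 0, and f(x) - f(y) = ‖x - y‖. Then the point x_δ = x - f(x) • ∇f(x) satisfies f(x_δ) = 0, where ∇f(x) denotes the gradient of f at x. -/
/-!
Along the segment from `x` to `y` the 1-Lipschitz function `f` drops by the full length `‖x - y‖`,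
so the triangle inequality forces `f` to decrease at unit speed along the whole segment. Hence the
derivative of `f` at `x` in the unit direction `u` of `x - y` is `1`; since `‖∇f(x)‖ ≤ 1`, the
equality case of Cauchy–Schwarz gives `∇f(x) = u`. Walking the distance `f x ≤ ‖x - y‖` along
`-u` therefore lands on the zero set of `f`.
-/

open Set RealInnerProductSpace
open scoped Gradient

theorem LipschitzWith.sub_eq_dist_of_dist_add_dist_eq {α : Type*} [PseudoMetricSpace α]
    {f : α → ℝ} (hf : LipschitzWith 1 f) {x y z : α} (hxy : f x - f y = dist x y)
    (hz : dist x z + dist z y = dist x y) : f x - f z = dist x z := by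
  have hxz : f x - f z ≤ dist x z := by
    simpa using (le_abs_self _).trans (hf.dist_le_mul x z)
  have hzy : f z - f y ≤ dist z y := by
    simpa using (le_abs_self _).trans (hf.dist_le_mul z y)
  linarith

section Normed

variable {E : Type*} [NormedAddCommGroup E] [NormedSpace ℝ E]

theorem LipschitzWith.apply_sub_smul_eq {f : E → ℝ} (hf : LipschitzWith 1 f) {x u : E}
    (hu : ‖u‖ = 1) {d t : ℝ} (hd : f x - f (x - d • u) = d) (ht : t ∈ Icc 0 d) :
    f (x - t • u) = f x - t := by
  have hdist : ∀ s ∈ Icc 0 d, dist x (x - s • u) = s := fun s hs => by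
    rw [dist_eq_norm, sub_sub_cancel, norm_smul, hu, mul_one, Real.norm_of_nonneg hs.1]
  have hdist' : dist (x - t • u) (x - d • u) = d - t := by
    rw [dist_eq_norm, sub_sub_sub_cancel_left, ← sub_smul, norm_smul, hu, mul_one,
      Real.norm_of_nonneg (sub_nonneg.2 ht.2)]
  have hd₀ : d ∈ Icc 0 d := ⟨ht.1.trans ht.2, le_rfl⟩
  have := hf.sub_eq_dist_of_dist_add_dist_eq (hd.trans (hdist d hd₀).symm)
    (by rw [hdist t ht, hdist', hdist d hd₀]; ring)
  linarith [hdist t ht]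

variable {F : Type*} [NormedAddCommGroup F] [NormedSpace ℝ F]

theorem HasFDerivAt.apply_eq_of_eqOn_Icc {f : E → F} {f' : E →L[ℝ] F} {x v : E} {c : F}
    {ε : ℝ} (hf : HasFDerivAt f f' x) (hε : 0 < ε)
    (h : ∀ t ∈ Icc 0 ε, f (x + t • v) = f x + t • c) : f' v = c := by
  have hray : HasDerivAt (fun t : ℝ => f (x + t • v)) (f' v) 0 := by
    have hline : HasDerivAt (fun t : ℝ => x + t • v) v 0 := by
      simpa using ((hasDerivAt_id (0 : ℝ)).smul_const v).const_add x
    exact (by simpa using hf : HasFDerivAt f f' (x + (0 : ℝ) • v)).comp_hasDerivAt 0 hline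
  have hlin : HasDerivWithinAt (fun t : ℝ => f x + t • c) c (Icc 0 ε) 0 := by
    simpa using (((hasDerivAt_id (0 : ℝ)).smul_const c).const_add (f x)).hasDerivWithinAt
  exact (uniqueDiffOn_Icc hε 0 ⟨le_rfl, hε.le⟩).eq_deriv _ hray.hasDerivWithinAt
    (hlin.congr (fun t ht => h t ht) (h 0 ⟨le_rfl, hε.le⟩))

end Normed

section InnerProduct

variable {E : Type*} [NormedAddCommGroup E] [InnerProductSpace ℝ E]

theorem eq_of_norm_le_one_of_inner_eq_one {g u : E} (hg : ‖g‖ ≤ 1) (hu : ‖u‖ = 1)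
    (hgu : ⟪g, u⟫ = 1) : g = u := by
  have hg₁ : ‖g‖ = 1 := le_antisymm hg <| by
    simpa [hgu, hu] using real_inner_le_norm g u
  exact (inner_eq_one_iff_of_norm_eq_one hg₁ hu).1 hgu

variable [CompleteSpace E]

theorem LipschitzWith.norm_gradient_le_s8 {f : E → ℝ} {C : NNReal} (hf : LipschitzWith C f)
    (x : E) : ‖∇ f x‖ ≤ C := by
  rw [gradient, LinearIsometryEquiv.norm_map]
  exact norm_fderiv_le_of_lipschitz ℝ hf

theorem LipschitzWith.gradient_eq {f : E → ℝ} (hf : LipschitzWith 1 f) {x u : E}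
    (hdiff : DifferentiableAt ℝ f x) (hu : ‖u‖ = 1) {d : ℝ} (hd₀ : 0 < d)
    (hd : f x - f (x - d • u) = d) : ∇ f x = u := by
  have hslope : fderiv ℝ f x (-u) = -1 := by
    refine hdiff.hasFDerivAt.apply_eq_of_eqOn_Icc hd₀ fun t ht => ?_
    simpa [smul_neg, ← sub_eq_add_neg] using hf.apply_sub_smul_eq hu hd ht
  refine eq_of_norm_le_one_of_inner_eq_one (by simpa using hf.norm_gradient_le_s8 x) hu ?_
  rw [inner_gradient_left, ← neg_neg u, map_neg, hslope, neg_neg]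

end InnerProduct

/-- Proposition 2 (decision boundary, pointwise form): if `x` is joined by a
transport ray to a negative point `y`, then `x - f x • ∇f(x)` lies on the
decision boundary `{z | f z = 0}`. -/
theorem otnn_boundary_point {E : Type*} [NormedAddCommGroup E]
    [InnerProductSpace ℝ E] [CompleteSpace E]
    (f : E → ℝ) (hf : LipschitzWith 1 f) (x : E) (hdiff : DifferentiableAt ℝ f x)
    (h : ∃ y : E, y ≠ x ∧ 0 ≤ f x ∧ f y ≤ 0 ∧ f x - f y = ‖x - y‖) :
    f (x - f x • gradient f x) = 0 := by
  obtain ⟨y, hyx, hfx, hfy, hxy⟩ := h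
  have hd₀ : 0 < ‖x - y‖ := norm_pos_iff.2 (sub_ne_zero.2 hyx.symm)
  set u := ‖x - y‖⁻¹ • (x - y)
  have hu : ‖u‖ = 1 := norm_smul_inv_norm (sub_ne_zero.2 hyx.symm)
  have hy : x - ‖x - y‖ • u = y := by
    rw [smul_inv_smul₀ hd₀.ne', sub_sub_cancel]
  have hd : f x - f (x - ‖x - y‖ • u) = ‖x - y‖ := by rw [hy, hxy]
  rw [hf.gradient_eq hdiff hu hd₀ hd, hf.apply_sub_smul_eq hu hd ⟨hfx, by linarith⟩, sub_self]
end
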